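/- arXiv:1704.01675 — 3 statements merged into one kernel-verified Lean document; each statement's English description precedes it below -/
import Mathlib

section
/- Define the symmetric bilinear form on ℤ[ω]² by ⟨x, y⟩ = (2/3)·Re(x U ȳᵀ) where U = [[0,1],[1,0]] and ω = (−1+i√3)/2. Restricting the standard hermitian form h(x,y) = x U ȳᵀ gives: the ℤ-lattice ℤ[ω]² with form 2·Re(h(x,y)) (i.e. the form ⟨x,y⟩ scaled by 3) is isomorphic as a lattice to A₂ ⊕ A₂(−1), where A₂ has Gram matrix [[2,−1],[−1,2]]. -/
open Complex ComplexConjugate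

/-- the rank-4 ℤ-lattice ℤ[ω]² with the symmetric form
(x,y) ↦ 2·Re(x U ȳᵀ) = 2·Re(x₁ȳ₂ + x₂ȳ₁), in the ℤ-basis
(1,0),(ω,0),(0,1),(0,ω), is isomorphic to A₂ ⊕ A₂(-1): there is a
ℤ-invertible base change P with Pᵀ G P equal to the Gram matrix of A₂ ⊕ A₂(-1). -/
theorem stmt5 :
    let ω : ℂ := (-1 + Real.sqrt 3 * Complex.I) / 2
    let h : (Fin 2 → ℂ) → (Fin 2 → ℂ) → ℂ := fun x y =>
      x 0 * conj (y 1) + x 1 * conj (y 0)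
    let B : Fin 4 → Fin 2 → ℂ := ![![1, 0], ![ω, 0], ![0, 1], ![0, ω]]
    let G : Matrix (Fin 4) (Fin 4) ℝ := Matrix.of fun i j => 2 * (h (B i) (B j)).re
    let A : Matrix (Fin 4) (Fin 4) ℝ :=
      !![2, -1, 0, 0;
        -1, 2, 0, 0;
         0, 0, -2, 1;
         0, 0, 1, -2]
    ∃ P : Matrix (Fin 4) (Fin 4) ℤ, IsUnit P.det ∧
      (P.map (Int.cast : ℤ → ℝ)).transpose * G * P.map (Int.cast : ℤ → ℝ) = A := by
  intro ω h B G A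
  have hω : ω = ⟨-1/2, Real.sqrt 3 / 2⟩ := by
    simp only [ω, Complex.ext_iff]
    constructor <;> simp [Complex.div_re, Complex.div_im, Complex.add_re, Complex.add_im,
      Complex.mul_re, Complex.mul_im, Complex.normSq] <;> ring
  have hs : Real.sqrt 3 * Real.sqrt 3 = 3 := Real.mul_self_sqrt (by norm_num)
  have hG : G = !![0,0,2,-1; 0,0,-1,2; 2,-1,0,0; -1,2,0,0] := by
    ext i j
    fin_cases i <;> fin_cases j <;>
      simp [G, h, B, hω, Complex.ext_iff, Complex.mul_re, Complex.mul_im,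
        Matrix.vecHead, Matrix.vecTail] <;>
      nlinarith [hs]
  refine ⟨!![1,0,1,0; 0,1,0,1; 1,-1,0,-1; 1,0,1,-1], ?_, ?_⟩
  · decide
  · rw [hG]
    ext i j
    fin_cases i <;> fin_cases j <;>
      simp [A, Matrix.mul_apply, Fin.sum_univ_four, Matrix.transpose_apply,
        Matrix.vecHead, Matrix.vecTail] <;> norm_num
end

section
/- Define j_Γ : GL₂(ℤ[ω]) → M₄(ℤ) by writing g = g₁ + g₂ω with g₁, g₂ ∈ M₂(ℤ) and setting j_Γ(g) = [[U(g₁−g₂)U, −Ug₂],[g₂U, g₁]] (block form), U = [[0,1],[1,0]]. Then for every g in the unitary group Γ = {g : g U ḡᵀ = U}, the image j_Γ(g) lies in Sp₄(ℤ), and j_Γ restricted to Γ is an injective group homomorphism. -/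
set_option maxHeartbeats 1000000

noncomputable def W : ℂ := (-1 + Real.sqrt 3 * Complex.I) / 2

lemma hW : W * W = -1 - W := by
  rw [Complex.ext_iff]
  constructor <;> simp [W, Complex.div_re, Complex.div_im, Complex.normSq] <;>
    nlinarith [Real.sq_sqrt (by norm_num : (3:ℝ) ≥ 0), Real.sqrt_nonneg 3]

lemma hWconj : (starRingEnd ℂ) W = -1 - W := by
  rw [Complex.ext_iff]
  constructor <;> simp [W, Complex.div_im, Complex.div_re] <;> ring

lemma mconj (m₁ m₂ : Matrix (Fin 2) (Fin 2) ℤ) :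
    ((m₁.map (Int.cast : ℤ → ℂ) + W • m₂.map (Int.cast : ℤ → ℂ)).map (starRingEnd ℂ)).transpose
      = m₁.transpose.map (Int.cast : ℤ → ℂ)
        + (-1 - W) • m₂.transpose.map (Int.cast : ℤ → ℂ) := by
  ext i j
  simp only [Matrix.transpose_apply, Matrix.map_apply, Matrix.add_apply, Matrix.smul_apply,
    smul_eq_mul, map_add, map_mul, hWconj, map_intCast]

lemma rearr (A B C D Uc : Matrix (Fin 2) (Fin 2) ℂ) :
    (A + W • B) * Uc * (C + (-1 - W) • D)
      = (A*Uc*C - A*Uc*D + B*Uc*D) + W • (B*Uc*C - A*Uc*D) := by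
  simp only [add_mul, mul_add, smul_mul_assoc, mul_smul_comm, smul_smul]
  match_scalars <;> first | ring1 | linear_combination -hW

lemma extractW (a b c d : ℤ) (h : (a:ℂ) + W * b = c + W * d) : a = c ∧ b = d := by
  have him := congrArg Complex.im h
  have hre := congrArg Complex.re h
  simp [W, Complex.div_im, Complex.div_re] at him hre
  refine ⟨?_, him⟩
  have : (a:ℝ) = c := by rw [him] at hre; linarith
  exact_mod_cast this

abbrev UU : Matrix (Fin 2) (Fin 2) ℤ := !![0, 1; 1, 0]

abbrev JJ : Matrix (Fin 2 ⊕ Fin 2) (Fin 2 ⊕ Fin 2) ℤ := Matrix.fromBlocks 0 (-1) 1 0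

abbrev jj (g₁ g₂ : Matrix (Fin 2) (Fin 2) ℤ) :
    Matrix (Fin 2 ⊕ Fin 2) (Fin 2 ⊕ Fin 2) ℤ :=
  Matrix.fromBlocks (UU * (g₁ - g₂) * UU) (-(UU * g₂)) (g₂ * UU) g₁

lemma getP (g₁ g₂ : Matrix (Fin 2) (Fin 2) ℤ)
    (hg : (g₁.map (Int.cast : ℤ → ℂ) + W • g₂.map (Int.cast : ℤ → ℂ)) * UU.map (Int.cast : ℤ → ℂ)
      * ((g₁.map (Int.cast : ℤ → ℂ) + W • g₂.map (Int.cast : ℤ → ℂ)).map (starRingEnd ℂ)).transpose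
      = UU.map (Int.cast : ℤ → ℂ)) :
    g₁*UU*g₁.transpose - g₁*UU*g₂.transpose + g₂*UU*g₂.transpose = UU ∧
      g₂*UU*g₁.transpose - g₁*UU*g₂.transpose = 0 := by
  rw [mconj, rearr] at hg
  have key : ∀ i j, ((g₁*UU*g₁.transpose - g₁*UU*g₂.transpose + g₂*UU*g₂.transpose) i j : ℂ)
      + W * ((g₂*UU*g₁.transpose - g₁*UU*g₂.transpose) i j : ℂ) = ((UU i j : ℤ) : ℂ) := by
    intro i j
    have hgij := congrFun (congrFun hg i) j
    simp only [Matrix.add_apply, Matrix.sub_apply, Matrix.smul_apply, Matrix.mul_apply,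
      Fin.sum_univ_two, Matrix.map_apply, Matrix.transpose_apply, smul_eq_mul] at hgij ⊢
    push_cast
    linear_combination hgij
  constructor <;> ext i j
  · exact (extractW ((g₁*UU*g₁.transpose - g₁*UU*g₂.transpose + g₂*UU*g₂.transpose) i j)
      ((g₂*UU*g₁.transpose - g₁*UU*g₂.transpose) i j) (UU i j) 0
      (by push_cast; linear_combination key i j)).1
  · simp only [Matrix.zero_apply]
    exact (extractW ((g₁*UU*g₁.transpose - g₁*UU*g₂.transpose + g₂*UU*g₂.transpose) i j)
      ((g₂*UU*g₁.transpose - g₁*UU*g₂.transpose) i j) (UU i j) 0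
      (by push_cast; linear_combination key i j)).2

lemma UU2 : UU * UU = 1 := by decide

lemma JJ2 : JJ * (-JJ) = 1 := by decide

lemma jmul (a₁ a₂ c₁ c₂ : Matrix (Fin 2) (Fin 2) ℤ) :
    jj (a₁ * c₁ - a₂ * c₂) (a₁ * c₂ + a₂ * c₁ - a₂ * c₂) = jj a₁ a₂ * jj c₁ c₂ := by
  ext i j
  rcases i with i | i <;> rcases j with j | j <;> fin_cases i <;> fin_cases j <;>
    simp [Matrix.mul_apply, Fintype.sum_sum_type, Fin.sum_univ_two, Matrix.fromBlocks,
      Matrix.vecMul, dotProduct, Matrix.vecHead, Matrix.vecTail] <;>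
    ring

lemma j10 : jj 1 0 = 1 := by
  ext i j
  rcases i with i | i <;> rcases j with j | j <;> fin_cases i <;> fin_cases j <;>
    simp [Matrix.fromBlocks, Matrix.one_apply]

lemma jinj (g₁ g₂ h₁ h₂ : Matrix (Fin 2) (Fin 2) ℤ) (h : jj g₁ g₂ = jj h₁ h₂) :
    g₁ = h₁ ∧ g₂ = h₂ := by
  constructor
  · ext i j
    have := congrFun (congrFun h (Sum.inr i)) (Sum.inr j)
    simpa [Matrix.fromBlocks] using this
  · ext i j
    have := congrFun (congrFun h (Sum.inr i)) (Sum.inl (1 - j))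
    fin_cases j <;>
      simpa [Matrix.fromBlocks, Matrix.mul_apply, Fin.sum_univ_two, Matrix.vecMul,
        dotProduct, Matrix.vecHead, Matrix.vecTail] using this

lemma jadj (g₁ g₂ : Matrix (Fin 2) (Fin 2) ℤ) :
    jj (UU * (g₁.transpose - g₂.transpose) * UU) (-(UU * g₂.transpose * UU)) =
      (-JJ) * (jj g₁ g₂).transpose * JJ := by
  ext i j
  rcases i with i | i <;> rcases j with j | j <;> fin_cases i <;> fin_cases j <;>
    simp [Matrix.mul_apply, Fintype.sum_sum_type, Fin.sum_univ_two, Matrix.fromBlocks,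
      Matrix.vecMul, dotProduct, Matrix.vecHead, Matrix.vecTail]

lemma psymp (M : Matrix (Fin 2 ⊕ Fin 2) (Fin 2 ⊕ Fin 2) ℤ)
    (h : M * ((-JJ) * M.transpose * JJ) = 1) : M.transpose * JJ * M = JJ := by
  have h2 := mul_eq_one_comm.mp h
  calc M.transpose * JJ * M = (JJ * -JJ) * (M.transpose * JJ * M) := by rw [JJ2, one_mul]
    _ = JJ * ((-JJ) * M.transpose * JJ * M) := by simp only [Matrix.mul_assoc]
    _ = JJ := by rw [h2, mul_one]

/-- writing g = g₁ + g₂ω ∈ Γ = {gUḡᵀ = U} with g₁,g₂ ∈ M₂(ℤ),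
j_Γ(g) = [[U(g₁-g₂)U, -Ug₂],[g₂U, g₁]] lies in Sp₄(ℤ), and j_Γ is an injective
group homomorphism on Γ. -/
theorem stmt14 :
    let ω : ℂ := (-1 + Real.sqrt 3 * Complex.I) / 2
    let U : Matrix (Fin 2) (Fin 2) ℤ := !![0, 1; 1, 0]
    let J : Matrix (Fin 2 ⊕ Fin 2) (Fin 2 ⊕ Fin 2) ℤ := Matrix.fromBlocks 0 (-1) 1 0
    let toC : Matrix (Fin 2) (Fin 2) ℤ → Matrix (Fin 2) (Fin 2) ℂ := fun m =>
      m.map (Int.cast : ℤ → ℂ)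
    let inGamma : Matrix (Fin 2) (Fin 2) ℤ → Matrix (Fin 2) (Fin 2) ℤ → Prop :=
      fun g₁ g₂ =>
        (toC g₁ + ω • toC g₂) * !![(0 : ℂ), 1; 1, 0] *
          ((toC g₁ + ω • toC g₂).map (starRingEnd ℂ)).transpose = !![(0 : ℂ), 1; 1, 0]
    let jΓ : Matrix (Fin 2) (Fin 2) ℤ → Matrix (Fin 2) (Fin 2) ℤ →
        Matrix (Fin 2 ⊕ Fin 2) (Fin 2 ⊕ Fin 2) ℤ := fun g₁ g₂ =>
      Matrix.fromBlocks (U * (g₁ - g₂) * U) (-(U * g₂)) (g₂ * U) g₁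
    (∀ g₁ g₂, inGamma g₁ g₂ → (jΓ g₁ g₂).transpose * J * jΓ g₁ g₂ = J) ∧
    (∀ g₁ g₂ h₁ h₂, inGamma g₁ g₂ → inGamma h₁ h₂ →
      jΓ (g₁ * h₁ - g₂ * h₂) (g₁ * h₂ + g₂ * h₁ - g₂ * h₂) = jΓ g₁ g₂ * jΓ h₁ h₂) ∧
    (∀ g₁ g₂ h₁ h₂, jΓ g₁ g₂ = jΓ h₁ h₂ → g₁ = h₁ ∧ g₂ = h₂) := by
  intro ω U J toC inGamma jΓ
  have hUc : (!![(0:ℂ), 1; 1, 0]) = UU.map (Int.cast : ℤ → ℂ) := by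
    ext i j; fin_cases i <;> fin_cases j <;> simp
  refine ⟨?_, ?_, ?_⟩
  · intro g₁ g₂ hg
    have hg' : (g₁.map (Int.cast : ℤ → ℂ) + W • g₂.map (Int.cast : ℤ → ℂ)) * !![(0:ℂ), 1; 1, 0]
        * ((g₁.map (Int.cast : ℤ → ℂ) + W • g₂.map (Int.cast : ℤ → ℂ)).map
            (starRingEnd ℂ)).transpose
        = !![(0:ℂ), 1; 1, 0] := hg
    rw [hUc] at hg'
    obtain ⟨hP1, hP2⟩ := getP g₁ g₂ hg'
    have hp1 : g₁ * (UU*(g₁.transpose-g₂.transpose)*UU) - g₂ * (-(UU*g₂.transpose*UU)) = 1 := by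
      have e1 : g₁ * (UU*(g₁.transpose-g₂.transpose)*UU) - g₂ * (-(UU*g₂.transpose*UU))
          = (g₁*UU*g₁.transpose - g₁*UU*g₂.transpose + g₂*UU*g₂.transpose)*UU := by
        noncomm_ring
      rw [e1, hP1, UU2]
    have hp2 : g₁ * (-(UU*g₂.transpose*UU)) + g₂*(UU*(g₁.transpose-g₂.transpose)*UU)
        - g₂*(-(UU*g₂.transpose*UU)) = 0 := by
      have e2 : g₁ * (-(UU*g₂.transpose*UU)) + g₂*(UU*(g₁.transpose-g₂.transpose)*UU)
          - g₂*(-(UU*g₂.transpose*UU))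
          = (g₂*UU*g₁.transpose - g₁*UU*g₂.transpose)*UU := by
        noncomm_ring
      rw [e2, hP2, Matrix.zero_mul]
    have hmul := jmul g₁ g₂ (UU*(g₁.transpose-g₂.transpose)*UU) (-(UU*g₂.transpose*UU))
    rw [hp1, hp2, j10, jadj] at hmul
    exact psymp (jj g₁ g₂) hmul.symm
  · intro g₁ g₂ h₁ h₂ _ _
    exact jmul g₁ g₂ h₁ h₂
  · intro g₁ g₂ h₁ h₂ h
    exact jinj g₁ g₂ h₁ h₂ h
end

section
/- Let ω = (−1+i√3)/2 and consider the map λ on coordinates given by (r, u) ↦ (p, q) with p = −u/(1 − x₁ − u) and q = (1 − x₁p)r/(rx₂ − x₂ + 1 − x₁p), where (x₁, x₂) ∈ ℂ² satisfies x₁x₂(1−x₁)(1−x₂)(1−x₁−x₂) ≠ 0. Let t = (1−x₁−x₂)/((1−x₁)(1−x₂)), and let w, w' satisfy w³ = u(1−u)²/(1−tu) and w'³ = r⁻²(1−r)⁻². Then, as an identity of rational functions, the element z = (1−x₁)^{2/3}(1−x₂)^{2/3}(1−r)(1−tu) w w' / (u(1−u)(1−p)(1−q)(1−x₁p−x₂q))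 satisfies z³ = p⁻²q⁻²(1−p)⁻²(1−q)⁻²(1−x₁p−x₂q)⁻². -/
set_option maxHeartbeats 1000000

/-- Proposition 2.5(1), algebraic identity: with
t = (1-x₁-x₂)/((1-x₁)(1-x₂)), p = -u/(1-x₁-u),
q = (1-x₁p)r/(rx₂ - x₂ + 1 - x₁p), w³ = u(1-u)²/(1-tu), w'³ = r⁻²(1-r)⁻²,
and s³ = ((1-x₁)(1-x₂))² (a choice of (1-x₁)^{2/3}(1-x₂)^{2/3}), the element
z = s(1-r)(1-tu)ww' / (u(1-u)(1-p)(1-q)(1-x₁p-x₂q)) satisfies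
z³ = p⁻²q⁻²(1-p)⁻²(1-q)⁻²(1-x₁p-x₂q)⁻². -/
theorem stmt19 (x₁ x₂ r u w w' s t p q z : ℂ)
    (hM : x₁ * x₂ * (1 - x₁) * (1 - x₂) * (1 - x₁ - x₂) ≠ 0)
    (ht : t = (1 - x₁ - x₂) / ((1 - x₁) * (1 - x₂)))
    (hw : w ^ 3 = u * (1 - u) ^ 2 / (1 - t * u))
    (hw' : w' ^ 3 = r⁻¹ ^ 2 * (1 - r)⁻¹ ^ 2)
    (hs : s ^ 3 = ((1 - x₁) * (1 - x₂)) ^ 2)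
    (hp : p = -u / (1 - x₁ - u))
    (hq : q = (1 - x₁ * p) * r / (r * x₂ - x₂ + 1 - x₁ * p))
    (hz : z = s * (1 - r) * (1 - t * u) * w * w' /
      (u * (1 - u) * (1 - p) * (1 - q) * (1 - x₁ * p - x₂ * q)))
    -- nondegeneracy of the various denominators
    (hu0 : u ≠ 0) (hu1 : u ≠ 1) (hr0 : r ≠ 0) (hr1 : r ≠ 1)
    (htu : 1 - t * u ≠ 0) (hden1 : 1 - x₁ - u ≠ 0)
    (hden2 : r * x₂ - x₂ + 1 - x₁ * p ≠ 0)
    (hp0 : p ≠ 0) (hq0 : q ≠ 0) (hp1 : 1 - p ≠ 0) (hq1 : 1 - q ≠ 0)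
    (hl5 : 1 - x₁ * p - x₂ * q ≠ 0) :
    z ^ 3 = p⁻¹ ^ 2 * q⁻¹ ^ 2 * (1 - p)⁻¹ ^ 2 * (1 - q)⁻¹ ^ 2 *
      (1 - x₁ * p - x₂ * q)⁻¹ ^ 2 := by
  have hx1 : (1 : ℂ) - x₁ ≠ 0 := fun h => hM (by rw [h]; ring)
  have hx2 : (1 : ℂ) - x₂ ≠ 0 := fun h => hM (by rw [h]; ring)
  have hr1' : (1 : ℂ) - r ≠ 0 := sub_ne_zero.mpr (Ne.symm hr1)
  have hu1' : (1 : ℂ) - u ≠ 0 := sub_ne_zero.mpr (Ne.symm hu1)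
  have hBC : r * x₂ - x₂ + 1 - x₁ * p
      = ((1 - x₁ - u) * (r * x₂ - x₂ + 1) + x₁ * u) / (1 - x₁ - u) := by
    rw [hp]; field_simp; ring
  have hC : (1 - x₁ - u) * (r * x₂ - x₂ + 1) + x₁ * u ≠ 0 := by
    intro h; apply hden2; rw [hBC, h, zero_div]
  have e5 : 1 - t * u
      = ((1 - x₁ - u) * (1 - x₂) + x₁ * u) / ((1 - x₁) * (1 - x₂)) := by
    rw [ht]; field_simp; ring
  have hN : (1 - x₁ - u) * (1 - x₂) + x₁ * u ≠ 0 := by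
    intro h; apply htu; rw [e5, h, zero_div]
  have e1 : 1 - p = (1 - x₁) / (1 - x₁ - u) := by
    rw [hp]; field_simp; ring
  have e2 : 1 - x₁ * p = (1 - x₁) * (1 - u) / (1 - x₁ - u) := by
    rw [hp]; field_simp; ring
  have eq : q = (1 - x₁) * (1 - u) * r / ((1 - x₁ - u) * (r * x₂ - x₂ + 1) + x₁ * u) := by
    rw [hq, e2, hBC]; field_simp
  have e3 : 1 - q = (1 - r) * ((1 - x₁ - u) * (1 - x₂) + x₁ * u)
      / ((1 - x₁ - u) * (r * x₂ - x₂ + 1) + x₁ * u) := by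
    rw [eq, eq_div_iff hC, sub_mul, div_mul_cancel₀ _ hC]; ring
  have e4 : 1 - x₁ * p - x₂ * q = (1 - x₁) * (1 - u) * ((1 - x₁ - u) * (1 - x₂) + x₁ * u)
      / ((1 - x₁ - u) * ((1 - x₁ - u) * (r * x₂ - x₂ + 1) + x₁ * u)) := by
    rw [eq, hp, eq_div_iff (mul_ne_zero hden1 hC)]
    have h1 : -u / (1 - x₁ - u) * (1 - x₁ - u) = -u := div_mul_cancel₀ _ hden1
    have h2 : (1 - x₁) * (1 - u) * r / ((1 - x₁ - u) * (r * x₂ - x₂ + 1) + x₁ * u)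
        * ((1 - x₁ - u) * (r * x₂ - x₂ + 1) + x₁ * u) = (1 - x₁) * (1 - u) * r :=
      div_mul_cancel₀ _ hC
    linear_combination (-x₁ * ((1 - x₁ - u) * (r * x₂ - x₂ + 1) + x₁ * u)) * h1
      + (-x₂ * (1 - x₁ - u)) * h2
  -- cleared-denominator versions
  have fp : p * (1 - x₁ - u) = -u := by
    rw [hp, div_mul_cancel₀ _ hden1]
  have f1 : (1 - p) * (1 - x₁ - u) = 1 - x₁ := by
    rw [e1, div_mul_cancel₀ _ hden1]
  have f5 : (1 - t * u) * ((1 - x₁) * (1 - x₂))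
      = (1 - x₁ - u) * (1 - x₂) + x₁ * u := by
    rw [e5, div_mul_cancel₀ _ (mul_ne_zero hx1 hx2)]
  have fq : q * ((1 - x₁ - u) * (r * x₂ - x₂ + 1) + x₁ * u)
      = (1 - x₁) * (1 - u) * r := by
    rw [eq, div_mul_cancel₀ _ hC]
  have f3 : (1 - q) * ((1 - x₁ - u) * (r * x₂ - x₂ + 1) + x₁ * u)
      = (1 - r) * ((1 - x₁ - u) * (1 - x₂) + x₁ * u) := by
    rw [e3, div_mul_cancel₀ _ hC]
  have f4 : (1 - x₁ * p - x₂ * q) *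
      ((1 - x₁ - u) * ((1 - x₁ - u) * (r * x₂ - x₂ + 1) + x₁ * u))
      = (1 - x₁) * (1 - u) * ((1 - x₁ - u) * (1 - x₂) + x₁ * u) := by
    rw [e4, div_mul_cancel₀ _ (mul_ne_zero hden1 hC)]

  -- abstract all composite subterms so everything is monomial level
  set Λ : ℂ := 1 - x₁ * p - x₂ * q with hΛ
  set a : ℂ := 1 - x₁ - u with ha
  set c : ℂ := a * (r * x₂ - x₂ + 1) + x₁ * u with hc
  set n : ℂ := a * (1 - x₂) + x₁ * u with hn
  set P : ℂ := 1 - p with hP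
  set Q : ℂ := 1 - q with hQ
  set T : ℂ := 1 - t * u with hT
  set R : ℂ := 1 - r with hR'
  set U : ℂ := 1 - u with hU
  set X₁ : ℂ := 1 - x₁ with hX1
  set X₂ : ℂ := 1 - x₂ with hX2
  clear_value Λ P Q T R U X₁ X₂
  -- key identity
  have hFne : (X₁ * X₂) ^ 2 * a ^ 2 * c ^ 2 ≠ 0 :=
    mul_ne_zero (mul_ne_zero (pow_ne_zero 2 (mul_ne_zero hx1 hx2))
      (pow_ne_zero 2 hden1)) (pow_ne_zero 2 hC)
  have key : (X₁ * X₂) ^ 2 * R * T ^ 2 * p ^ 2 * q ^ 2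
      = r ^ 2 * u ^ 2 * U * P * Q * Λ := by
    apply mul_right_cancel₀ hFne
    have l : (X₁ * X₂) ^ 2 * R * T ^ 2 * p ^ 2 * q ^ 2 *
        ((X₁ * X₂) ^ 2 * a ^ 2 * c ^ 2)
        = (X₁ * X₂) ^ 2 * R * (T * (X₁ * X₂)) ^ 2 * (p * a) ^ 2 * (q * c) ^ 2 := by
      ring
    have rr : r ^ 2 * u ^ 2 * U * P * Q * Λ * ((X₁ * X₂) ^ 2 * a ^ 2 * c ^ 2)
        = r ^ 2 * u ^ 2 * U * (P * a) * (Q * c) * (Λ * (a * c)) * (X₁ * X₂) ^ 2 := by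
      ring
    rw [l, rr, f5, fp, fq, f1, f3, f4]
    ring
  -- reduce z^3 to a single fraction
  have h3 : z ^ 3 = s ^ 3 * R ^ 3 * T ^ 3 * w ^ 3 * w' ^ 3 /
      (u * U * P * Q * Λ) ^ 3 := by
    rw [hz, div_pow]; ring
  have hD : u * U * P * Q * Λ ≠ 0 :=
    mul_ne_zero (mul_ne_zero (mul_ne_zero (mul_ne_zero hu0 hu1') hp1) hq1) hl5
  have hD3 : (u * U * P * Q * Λ) ^ 3 ≠ 0 := pow_ne_zero 3 hD
  have hDen : r ^ 2 * (u * U * P * Q * Λ) ^ 3 ≠ 0 :=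
    mul_ne_zero (pow_ne_zero 2 hr0) hD3
  have hz3 : z ^ 3 = (X₁ * X₂) ^ 2 * R * T ^ 2 * u * U ^ 2 /
      (r ^ 2 * (u * U * P * Q * Λ) ^ 3) := by
    rw [h3, hw, hw', hs, div_eq_div_iff hD3 hDen, inv_pow, inv_pow,
      inv_eq_one_div, inv_eq_one_div]
    field_simp
  have hE : p ^ 2 * q ^ 2 * P ^ 2 * Q ^ 2 * Λ ^ 2 ≠ 0 :=
    mul_ne_zero (mul_ne_zero (mul_ne_zero (mul_ne_zero (pow_ne_zero 2 hp0)
      (pow_ne_zero 2 hq0)) (pow_ne_zero 2 hp1)) (pow_ne_zero 2 hq1)) (pow_ne_zero 2 hl5)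
  have hRw : p⁻¹ ^ 2 * q⁻¹ ^ 2 * P⁻¹ ^ 2 * Q⁻¹ ^ 2 * Λ⁻¹ ^ 2
      = 1 / (p ^ 2 * q ^ 2 * P ^ 2 * Q ^ 2 * Λ ^ 2) := by
    rw [inv_pow, inv_pow, inv_pow, inv_pow, inv_pow,
      one_div, mul_inv, mul_inv, mul_inv, mul_inv]
  rw [hz3, hRw, div_eq_div_iff hDen hE]
  linear_combination (u * U ^ 2 * P ^ 2 * Q ^ 2 * Λ ^ 2) * key
end
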